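/- Under the stated assumptions, for every unit vector x ∈ ℝ³ satisfying x·f_i < ε_i for all i ∈ {0, 1, …, m} (i.e., x in the eroded free space), the artificial potential U(x) is nonnegative, and U(x) = 0 if and only if x = x*; that is, x = x* is the unique global minimum of U on the eroded free space. -/

import Mathlib

open scoped RealInnerProductSpace

/-- The repulsive potential function `φ` with parameters `a = ε*` and `b = ε`. -/
noncomputable def phi (a b : ℝ) (z : ℝ) : ℝ :=
  if a ≤ z then (z - a) ^ 2 * Real.log ((b - a) / (b - z)) else 0

/-- The artificial potential
`U(x) = k_a (1 − x·x*) + k_r Σ_{i=0}^m φ_i(x·f_i)`. -/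
noncomputable def Upot {m : ℕ} (ka kr : ℝ)
    (xstar : EuclideanSpace ℝ (Fin 3)) (f : Fin (m + 1) → EuclideanSpace ℝ (Fin 3))
    (es eb : Fin (m + 1) → ℝ) (x : EuclideanSpace ℝ (Fin 3)) : ℝ :=
  ka * (1 - ⟪x, xstar⟫) + kr * ∑ i, phi (es i) (eb i) ⟪x, f i⟫

/- Every term of `U` is nonnegative on the free space, and the attractive term vanishes only
at `x*`, since `x·x* = 1` forces `x = x*` for unit vectors. Conversely, `x*` lies outside the
support `[ε_i*, ε_i)` of every repulsive term except possibly at its left end, where `φ_i`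
vanishes too. -/

lemma phi_nonneg {a b z : ℝ} (hz : z < b) : 0 ≤ phi a b z := by
  unfold phi
  split_ifs with h
  · refine mul_nonneg (sq_nonneg _) (Real.log_nonneg ?_)
    rw [le_div_iff₀ (by linarith)]
    linarith
  · exact le_rfl

lemma phi_eq_zero_of_le {a b z : ℝ} (hz : z ≤ a) : phi a b z = 0 := by
  unfold phi
  split_ifs with h
  · simp [le_antisymm hz h]
  · rfl

lemma Upot_self {m : ℕ} (ka kr : ℝ) {xstar : EuclideanSpace ℝ (Fin 3)}
    {f : Fin (m + 1) → EuclideanSpace ℝ (Fin 3)} {es : Fin (m + 1) → ℝ} (eb : Fin (m + 1) → ℝ)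
    (hxstar : ‖xstar‖ = 1) (hgoal : ∀ i, ⟪xstar, f i⟫ ≤ es i) :
    Upot ka kr xstar f es eb xstar = 0 := by
  have hattr : ⟪xstar, xstar⟫ = (1 : ℝ) := by
    rw [real_inner_self_eq_norm_sq, hxstar, one_pow]
  have hrep : ∑ i, phi (es i) (eb i) ⟪xstar, f i⟫ = 0 :=
    Finset.sum_eq_zero fun i _ => phi_eq_zero_of_le (hgoal i)
  simp only [Upot, hattr, hrep, sub_self, mul_zero, add_zero]

theorem potential_unique_global_minimum_general
    (m : ℕ) (ka kr : ℝ) (hka : 0 < ka) (hkr : 0 < kr)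
    (xstar : EuclideanSpace ℝ (Fin 3)) (f : Fin (m + 1) → EuclideanSpace ℝ (Fin 3))
    (hxstar : ‖xstar‖ = 1)
    (es eb : Fin (m + 1) → ℝ)
    (hgoal : ∀ i, ⟪xstar, f i⟫ ≤ es i) :
    ∀ x : EuclideanSpace ℝ (Fin 3), ‖x‖ = 1 → (∀ i, ⟪x, f i⟫ < eb i) →
      0 ≤ Upot ka kr xstar f es eb x ∧
        (Upot ka kr xstar f es eb x = 0 ↔ x = xstar) := by
  intro x hx hfree
  have hattr : 0 ≤ ka * (1 - ⟪x, xstar⟫) :=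
    mul_nonneg hka.le (sub_nonneg.2 (real_inner_le_one_of_norm_eq_one hx hxstar))
  have hrep : 0 ≤ kr * ∑ i, phi (es i) (eb i) ⟪x, f i⟫ :=
    mul_nonneg hkr.le (Finset.sum_nonneg fun i _ => phi_nonneg (hfree i))
  refine ⟨add_nonneg hattr hrep, fun hzero => ?_, ?_⟩
  · have h := ((add_eq_zero_iff_of_nonneg hattr hrep).1 hzero).1
    rw [mul_eq_zero, sub_eq_zero] at h
    exact (inner_eq_one_iff_of_norm_eq_one hx hxstar).1 (h.resolve_left hka.ne').symm
  · rintro rfl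
    exact Upot_self ka kr eb hxstar hgoal

/-- on the eroded free space the artificial potential `U` is
nonnegative and vanishes exactly at the goal `x*`; i.e. `x = x*` is the unique
global minimum of `U` there. -/
theorem potential_unique_global_minimum
    (m : ℕ) (hm : 1 ≤ m) (ka kr : ℝ) (hka : 0 < ka) (hkr : 0 < kr)
    (xstar : EuclideanSpace ℝ (Fin 3)) (f : Fin (m + 1) → EuclideanSpace ℝ (Fin 3))
    (hxstar : ‖xstar‖ = 1) (hf : ∀ i, ‖f i‖ = 1) (hf0 : f 0 = -xstar)
    (es eb : Fin (m + 1) → ℝ) (heseb : ∀ i, es i < eb i) (heb : ∀ i, eb i < 1)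
    (hgoal : ∀ i, ⟪xstar, f i⟫ ≤ es i) :
    ∀ x : EuclideanSpace ℝ (Fin 3), ‖x‖ = 1 → (∀ i, ⟪x, f i⟫ < eb i) →
      0 ≤ Upot ka kr xstar f es eb x ∧
        (Upot ka kr xstar f es eb x = 0 ↔ x = xstar) :=
  potential_unique_global_minimum_general m ka kr hka hkr xstar f hxstar es eb hgoal
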